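/- Let φ be a strictly convex norm on ℝⁿ, K ⊆ ℝⁿ closed, and 1 < λ < ∞. Then there exists a modulus ω_λ : (0,∞) → [0,∞) with ω_λ(t) → 0 as t → 0⁺ such that φ(a − b) ≤ δ_K^φ(x) · ω_λ(φ(x − y)/δ_K^φ(x)) whenever x satisfies ρ_K^φ(x) ≥ λ, y ∈ ℝⁿ, a ∈ ξ_K^φ(x), and b ∈ ξ_K^φ(y). -/

import Mathlib

open Set Filter Metric MeasureTheory Topology ENNReal

noncomputable section

abbrev Euc (n : ℕ) := EuclideanSpace ℝ (Fin n)

def IsNorm {n : ℕ} (φ : Euc n → ℝ) : Prop :=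
  (∀ x, φ x = 0 ↔ x = 0) ∧ (∀ (c : ℝ) (x : Euc n), φ (c • x) = |c| * φ x) ∧
    (∀ x y, φ (x + y) ≤ φ x + φ y)

def StrictlyConvexNorm {n : ℕ} (φ : Euc n → ℝ) : Prop :=
  IsNorm φ ∧ ∀ a b, φ (a + b) = φ a + φ b → φ b • a = φ a • b

def UniformlyConvexNorm {n : ℕ} (φ : Euc n → ℝ) : Prop :=
  IsNorm φ ∧ ∃ γ : ℝ, 0 < γ ∧ ConvexOn ℝ Set.univ (fun x => φ x - γ * ‖x‖)

def distφ {n : ℕ} (φ : Euc n → ℝ) (K : Set (Euc n)) (x : Euc n) : ℝ :=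
  sInf {r | ∃ y ∈ K, r = φ (x - y)}

def nearφ {n : ℕ} (φ : Euc n → ℝ) (K : Set (Euc n)) (x : Euc n) : Set (Euc n) :=
  {a ∈ K | φ (x - a) = distφ φ K x}

def rhoφ {n : ℕ} (φ : Euc n → ℝ) (K : Set (Euc n)) (x : Euc n) : ℝ≥0∞ :=
  sSup {r : ℝ≥0∞ | ∃ s : ℝ, ∃ a ∈ nearφ φ K x,
    r = ENNReal.ofReal s ∧ distφ φ K (a + s • (x - a)) = s * distφ φ K x}

def normalBundle {n : ℕ} (φ : Euc n → ℝ) (K : Set (Euc n)) : Set (Euc n × Euc n) :=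
  {p | p.1 ∈ K ∧ φ p.2 = 1 ∧ ∃ s : ℝ, 0 < s ∧ distφ φ K (p.1 + s • p.2) = s}

def reachφ {n : ℕ} (φ : Euc n → ℝ) (K : Set (Euc n)) (p : Euc n × Euc n) : ℝ≥0∞ :=
  sSup {r : ℝ≥0∞ | ∃ s : ℝ, 0 < s ∧ r = ENNReal.ofReal s ∧ distφ φ K (p.1 + s • p.2) = s}

def cutLocus {n : ℕ} (φ : Euc n → ℝ) (K : Set (Euc n)) : Set (Euc n) :=
  {x | ∃ p ∈ normalBundle φ K, reachφ φ K p ≠ ⊤ ∧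
    x = p.1 + (reachφ φ K p).toReal • p.2}

def PtTwiceDiffAt {n : ℕ} (f : Euc n → ℝ) (x : Euc n) : Prop :=
  ∃ (L : Euc n →L[ℝ] ℝ) (Q : Euc n →L[ℝ] Euc n →L[ℝ] ℝ),
    Tendsto (fun y => |f y - f x - L (y - x) - Q (y - x) (y - x)| / ‖y - x‖ ^ 2)
      (𝓝[≠] x) (𝓝 0)

/-
Since `ρ(x) ≥ λ > 1`, some `x' = a + s (x - a)` with `s > (1 + λ) / 2` and `a ∈ ξ(x)` has
distance `s d` to `K`, where `d = δ(x)`; strict convexity makes `a` the only nearest point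
of `x`. A nearest point `b` of `y` is then at distance `q ≤ d + 2 φ(x - y)` from `x` but at
distance at least `s d` from `x'`, so the triangle `x', x, b` is nearly degenerate:
`x' - b = (s - 1) d u + q v` with `u, v` the `φ`-unit vectors along `x - a` and `x - b`,
which forces `φ(u + v)` close to `2`. On the compact unit sphere of a strictly convex norm
this forces `u` close to `v`, and `a - b = q v - d u`.
-/

namespace IsNorm

variable {n : ℕ} {φ : Euc n → ℝ}

lemma eq_zero_iff (hn : IsNorm φ) {x : Euc n} : φ x = 0 ↔ x = 0 := hn.1 x

lemma map_smul (hn : IsNorm φ) (c : ℝ) (x : Euc n) : φ (c • x) = |c| * φ x := hn.2.1 c x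

lemma add_le (hn : IsNorm φ) (x y : Euc n) : φ (x + y) ≤ φ x + φ y := hn.2.2 x y

lemma map_zero (hn : IsNorm φ) : φ 0 = 0 := hn.eq_zero_iff.mpr rfl

lemma map_neg (hn : IsNorm φ) (x : Euc n) : φ (-x) = φ x := by
  simpa using hn.map_smul (-1) x

lemma nonneg (hn : IsNorm φ) (x : Euc n) : 0 ≤ φ x := by
  have h := hn.add_le x (-x)
  rw [add_neg_cancel, hn.map_zero, hn.map_neg] at h
  linarith

lemma map_smul_of_nonneg (hn : IsNorm φ) {c : ℝ} (hc : 0 ≤ c) (x : Euc n) :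
    φ (c • x) = c * φ x := by
  rw [hn.map_smul, abs_of_nonneg hc]

lemma map_sub_comm (hn : IsNorm φ) (x y : Euc n) : φ (x - y) = φ (y - x) := by
  rw [← hn.map_neg, neg_sub]

lemma map_sub_le (hn : IsNorm φ) (x y z : Euc n) : φ (x - z) ≤ φ (x - y) + φ (y - z) := by
  simpa using hn.add_le (x - y) (y - z)

lemma map_inv_smul_self (hn : IsNorm φ) {x : Euc n} (hx : 0 < φ x) : φ ((φ x)⁻¹ • x) = 1 := by
  rw [hn.map_smul_of_nonneg (inv_nonneg.mpr hx.le), inv_mul_cancel₀ hx.ne']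

lemma min_mul_two_sub_le (hn : IsNorm φ) {u v : Euc n} (hu : φ u = 1) (hv : φ v = 1) {α β : ℝ}
    (hα : 0 ≤ α) (hβ : 0 ≤ β) : min α β * (2 - φ (u + v)) ≤ α + β - φ (α • u + β • v) := by
  set γ := min α β
  have hγα : γ ≤ α := min_le_left α β
  have hγβ : γ ≤ β := min_le_right α β
  have hsplit : α • u + β • v = γ • (u + v) + ((α - γ) • u + (β - γ) • v) := by module
  have htri : φ (α • u + β • v) ≤ γ * φ (u + v) + ((α - γ) + (β - γ)) :=
    calc φ (α • u + β • v)
        ≤ φ (γ • (u + v)) + (φ ((α - γ) • u) + φ ((β - γ) • v)) := by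
          rw [hsplit]; exact (hn.add_le _ _).trans (add_le_add_right (hn.add_le _ _) _)
      _ = γ * φ (u + v) + ((α - γ) + (β - γ)) := by
          rw [hn.map_smul_of_nonneg (le_min hα hβ), hn.map_smul_of_nonneg (sub_nonneg.mpr hγα),
            hn.map_smul_of_nonneg (sub_nonneg.mpr hγβ), hu, hv, mul_one, mul_one]
  linarith

lemma convexOn (hn : IsNorm φ) : ConvexOn ℝ univ φ :=
  ⟨convex_univ, fun x _ y _ s t hs ht _ => by
    simpa only [hn.map_smul_of_nonneg hs, hn.map_smul_of_nonneg ht, smul_eq_mul] using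
      hn.add_le (s • x) (t • y)⟩

lemma continuous (hn : IsNorm φ) : Continuous φ :=
  continuousOn_univ.mp (hn.convexOn.continuousOn isOpen_univ)

lemma exists_pos_mul_norm_le (hn : IsNorm φ) : ∃ c : ℝ, 0 < c ∧ ∀ x, c * ‖x‖ ≤ φ x := by
  rcases subsingleton_or_nontrivial (Euc n) with _ | _
  · exact ⟨1, one_pos, fun x => by simp [Subsingleton.elim x 0, hn.map_zero]⟩
  obtain ⟨z, hz, hmin⟩ := (isCompact_sphere (0 : Euc n) 1).exists_isMinOn
    (NormedSpace.sphere_nonempty.mpr zero_le_one) hn.continuous.continuousOn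
  have hz0 : z ≠ 0 := ne_zero_of_mem_unit_sphere ⟨z, hz⟩
  refine ⟨φ z, (hn.nonneg z).lt_of_ne (Ne.symm (mt hn.eq_zero_iff.mp hz0)), fun x => ?_⟩
  rcases eq_or_ne x 0 with rfl | hx
  · simp [hn.map_zero]
  have hxn : 0 < ‖x‖ := norm_pos_iff.mpr hx
  have hmem : ‖x‖⁻¹ • x ∈ sphere (0 : Euc n) 1 := by
    simp [norm_smul, inv_mul_cancel₀ hxn.ne']
  have : φ z ≤ φ (‖x‖⁻¹ • x) := hmin hmem
  rw [hn.map_smul_of_nonneg (inv_nonneg.mpr hxn.le)] at this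
  rwa [← le_div_iff₀ hxn, div_eq_inv_mul]

lemma isCompact_unitSphere (hn : IsNorm φ) : IsCompact {z : Euc n | φ z = 1} := by
  obtain ⟨c, hc, hle⟩ := hn.exists_pos_mul_norm_le
  refine Metric.isCompact_of_isClosed_isBounded (isClosed_eq hn.continuous continuous_const)
    ((isBounded_closedBall (x := 0) (r := 1 / c)).subset fun z hz => ?_)
  exact mem_closedBall_zero_iff.mpr ((le_div_iff₀' hc).mpr (hz ▸ hle z))

end IsNorm

section Distance

variable {n : ℕ} {φ : Euc n → ℝ} {K : Set (Euc n)}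

lemma distφ_le (hn : IsNorm φ) {b : Euc n} (hb : b ∈ K) (x : Euc n) : distφ φ K x ≤ φ (x - b) :=
  csInf_le ⟨0, by rintro r ⟨y, -, rfl⟩; exact hn.nonneg _⟩ ⟨b, hb, rfl⟩

lemma distφ_pos (hn : IsNorm φ) {x a : Euc n} (ha : a ∈ nearφ φ K x) (hx : x ∉ K) :
    0 < distφ φ K x := by
  refine ha.2 ▸ (hn.nonneg _).lt_of_ne fun h => hx ?_
  rw [eq_comm, hn.eq_zero_iff, sub_eq_zero] at h
  exact h ▸ ha.1

lemma map_sub_le_of_mem_nearφ (hn : IsNorm φ) {x y a b : Euc n} (ha : a ∈ nearφ φ K x)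
    (hb : b ∈ nearφ φ K y) : φ (x - b) ≤ φ (x - a) + 2 * φ (x - y) :=
  calc φ (x - b) ≤ φ (x - y) + φ (y - b) := hn.map_sub_le _ _ _
    _ ≤ φ (x - y) + φ (y - a) := by rw [hb.2]; gcongr; exact distφ_le hn ha.1 y
    _ ≤ φ (x - y) + (φ (y - x) + φ (x - a)) := by gcongr; exact hn.map_sub_le _ _ _
    _ = φ (x - a) + 2 * φ (x - y) := by rw [hn.map_sub_comm y x]; ring

end Distance

section StrictlyConvex

variable {n : ℕ} {φ : Euc n → ℝ}

lemma StrictlyConvexNorm.uniform_convex (hφ : StrictlyConvexNorm φ) {ε : ℝ} (hε : 0 < ε) :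
    ∃ δ, 0 < δ ∧ ∀ u v, φ u = 1 → φ v = 1 → ε ≤ φ (u - v) → φ (u + v) ≤ 2 - δ := by
  set S := {p : Euc n × Euc n | φ p.1 = 1 ∧ φ p.2 = 1 ∧ ε ≤ φ (p.1 - p.2)}
  have hcont := hφ.1.continuous
  have hS : IsCompact S := by
    refine (hφ.1.isCompact_unitSphere.prod hφ.1.isCompact_unitSphere).of_isClosed_subset ?_
      fun p hp => ⟨hp.1, hp.2.1⟩
    exact (isClosed_eq (by fun_prop) continuous_const).inter
      ((isClosed_eq (by fun_prop) continuous_const).inter (isClosed_le continuous_const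
        (hcont.comp (continuous_fst.sub continuous_snd))))
  rcases S.eq_empty_or_nonempty with hSe | hSne
  · refine ⟨1, one_pos, fun u v hu hv huv => ?_⟩
    exact absurd (show (u, v) ∈ S from ⟨hu, hv, huv⟩) (hSe ▸ notMem_empty _)
  obtain ⟨⟨u₀, v₀⟩, ⟨hu₀, hv₀, huv₀⟩, hmax⟩ :=
    hS.exists_isMaxOn hSne (hcont.comp (continuous_fst.add continuous_snd)).continuousOn
  -- equality `φ (u₀ + v₀) = 2` would force `u₀ = v₀` by strict convexity
  have hlt : φ (u₀ + v₀) < 2 := by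
    refine (hφ.1.add_le u₀ v₀).trans_eq (by rw [hu₀, hv₀]; norm_num) |>.lt_of_ne fun h => ?_
    have := hφ.2 u₀ v₀ (by rw [h, hu₀, hv₀]; norm_num)
    rw [hu₀, hv₀, one_smul, one_smul] at this
    rw [this, sub_self, hφ.1.map_zero] at huv₀
    linarith
  exact ⟨2 - φ (u₀ + v₀), by linarith, fun u v hu hv huv => by
    have : φ (u + v) ≤ φ (u₀ + v₀) := hmax (show (u, v) ∈ S from ⟨hu, hv, huv⟩)
    linarith⟩

lemma StrictlyConvexNorm.eq_of_mem_nearφ_of_far (hφ : StrictlyConvexNorm φ) {K : Set (Euc n)}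
    {x a' : Euc n} (hd : 0 < distφ φ K x) {s : ℝ} (hs : 1 < s) (ha' : a' ∈ nearφ φ K x)
    (hfar : distφ φ K (a' + s • (x - a')) = s * distφ φ K x) :
    ∀ a ∈ nearφ φ K x, a = a' := by
  intro a ha
  set d := distφ φ K x
  have hx' : a' + s • (x - a') - x = (s - 1) • (x - a') := by module
  have hφx' : φ (a' + s • (x - a') - x) = (s - 1) * d := by
    rw [hx', hφ.1.map_smul_of_nonneg (by linarith), ha'.2]
  -- `a` is also a nearest point of `a' + s • (x - a')`, so the triangle through `x` is degenerate
  have hsum : φ ((a' + s • (x - a') - x) + (x - a)) =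
      φ (a' + s • (x - a') - x) + φ (x - a) := by
    refine le_antisymm (hφ.1.add_le _ _) ?_
    rw [hφx', ha.2, sub_add_sub_cancel]
    calc (s - 1) * d + d = distφ φ K (a' + s • (x - a')) := by rw [hfar]; ring
      _ ≤ _ := distφ_le hφ.1 ha.1 _
  have hsc := hφ.2 _ _ hsum
  rw [hφx', ha.2, hx', smul_smul, mul_comm] at hsc
  have hne : (s - 1) * d ≠ 0 := mul_ne_zero (by linarith) hd.ne'
  exact (sub_right_injective (smul_right_injective _ hne hsc)).symm

lemma StrictlyConvexNorm.exists_far_of_lt_rhoφ (hφ : StrictlyConvexNorm φ) {K : Set (Euc n)}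
    {x a : Euc n} (ha : a ∈ nearφ φ K x) (hd : 0 < distφ φ K x) {μ : ℝ} (hμ : 1 ≤ μ)
    (h : ENNReal.ofReal μ < rhoφ φ K x) :
    ∃ s, μ < s ∧ distφ φ K (a + s • (x - a)) = s * distφ φ K x := by
  obtain ⟨_, ⟨s, a', ha', rfl, hfar⟩, hμs⟩ := lt_sSup_iff.mp h
  have hμs : μ < s := (ENNReal.ofReal_lt_ofReal_iff'.mp hμs).1
  obtain rfl := hφ.eq_of_mem_nearφ_of_far hd (hμ.trans_lt hμs) ha' hfar a ha
  exact ⟨s, hμs, hfar⟩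

end StrictlyConvex

section Modulus

variable {n : ℕ} {φ : Euc n → ℝ}

/-- An inverse of the modulus of convexity of the `φ`-unit sphere. -/
def convexityModulus (φ : Euc n → ℝ) (δ : ℝ) : ℝ :=
  sSup {r | ∃ u v, φ u = 1 ∧ φ v = 1 ∧ 2 - δ ≤ φ (u + v) ∧ r = φ (u - v)}

lemma convexityModulus_nonneg (hn : IsNorm φ) (δ : ℝ) : 0 ≤ convexityModulus φ δ :=
  Real.sSup_nonneg fun _ ⟨_, _, _, _, _, hr⟩ => hr ▸ hn.nonneg _

lemma map_sub_le_convexityModulus (hn : IsNorm φ) {δ : ℝ} {u v : Euc n} (hu : φ u = 1)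
    (hv : φ v = 1) (huv : 2 - δ ≤ φ (u + v)) : φ (u - v) ≤ convexityModulus φ δ := by
  refine le_csSup ⟨2, ?_⟩ ⟨u, v, hu, hv, huv, rfl⟩
  rintro _ ⟨u, v, hu, hv, -, rfl⟩
  have := hn.add_le u (-v)
  rw [← sub_eq_add_neg, hn.map_neg, hu, hv] at this
  linarith

lemma tendsto_convexityModulus (hφ : StrictlyConvexNorm φ) :
    Tendsto (convexityModulus φ) (𝓝 0) (𝓝 0) := by
  refine Metric.tendsto_nhds.mpr fun ε hε => ?_
  obtain ⟨δ, hδ, hconv⟩ := hφ.uniform_convex (half_pos hε)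
  filter_upwards [Iio_mem_nhds hδ] with τ hτ
  rw [Real.dist_0_eq_abs, abs_of_nonneg (convexityModulus_nonneg hφ.1 τ)]
  refine (Real.sSup_le (fun r hr => ?_) (half_pos hε).le).trans_lt (half_lt_self hε)
  obtain ⟨u, v, hu, hv, huv, rfl⟩ := hr
  by_contra! h
  have := hconv u v hu hv h.le
  linarith [mem_Iio.mp hτ]

lemma IsNorm.map_sub_le_of_far (hn : IsNorm φ) {x a b : Euc n}
    {s m t : ℝ} (hd : 0 < φ (x - a)) (hm : 0 < m) (hms : m ≤ s - 1) (hm1 : m ≤ 1)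
    (hfar : s * φ (x - a) ≤ φ (a + s • (x - a) - b)) (ht : φ (x - b) ≤ φ (x - a) + t) :
    φ (a - b) ≤ t + (φ (x - a) + t) * convexityModulus φ (t / (m * φ (x - a))) := by
  set d := φ (x - a)
  set q := φ (x - b)
  have hdq : d ≤ q := by
    have := hn.map_sub_le (a + s • (x - a)) x b
    rw [show a + s • (x - a) - x = (s - 1) • (x - a) by module,
      hn.map_smul_of_nonneg (by linarith)] at this
    nlinarith
  have hq : 0 < q := hd.trans_le hdq
  set u := d⁻¹ • (x - a)
  set v := q⁻¹ • (x - b)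
  have hu : φ u = 1 := hn.map_inv_smul_self hd
  have hv : φ v = 1 := hn.map_inv_smul_self hq
  have hdu : d • u = x - a := smul_inv_smul₀ hd.ne' _
  have hqv : q • v = x - b := smul_inv_smul₀ hq.ne' _
  have hx' : a + s • (x - a) - b = ((s - 1) * d) • u + q • v := by
    rw [mul_smul, hdu, hqv]; module
  have hdefect :=
    hn.min_mul_two_sub_le hu hv (α := (s - 1) * d) (mul_nonneg (by linarith) hd.le) hq.le
  rw [← hx'] at hdefect
  have hmin : m * d ≤ min ((s - 1) * d) q :=
    le_min (mul_le_mul_of_nonneg_right hms hd.le) (by nlinarith)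
  have hsum : φ (u + v) ≤ 2 := by linarith [hn.add_le u v]
  have huv : 2 - t / (m * d) ≤ φ (u + v) := by
    rw [sub_le_comm, le_div_iff₀ (by positivity), mul_comm]
    nlinarith
  have hab : a - b = q • (v - u) + (q - d) • u :=
    calc a - b = q • v - d • u := by rw [hqv, hdu]; abel
      _ = q • (v - u) + (q - d) • u := by module
  calc φ (a - b) ≤ φ (q • (v - u)) + φ ((q - d) • u) := hab ▸ hn.add_le _ _
    _ = q * φ (v - u) + (q - d) := by
        rw [hn.map_smul_of_nonneg hq.le, hn.map_smul_of_nonneg (sub_nonneg.mpr hdq), hu, mul_one]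
    _ ≤ t + (d + t) * convexityModulus φ (t / (m * d)) := by
        rw [hn.map_sub_comm]
        have := map_sub_le_convexityModulus hn hu hv huv
        have := convexityModulus_nonneg hn (t / (m * d))
        nlinarith

/-- `d * projectionModulus φ m (t / d)` is the bound of `IsNorm.map_sub_le_of_far` for `2 t`. -/
def projectionModulus (φ : Euc n → ℝ) (m τ : ℝ) : ℝ :=
  2 * |τ| + (1 + 2 * |τ|) * convexityModulus φ (2 * |τ| / m)

lemma projectionModulus_nonneg (hn : IsNorm φ) (m τ : ℝ) :
    0 ≤ projectionModulus φ m τ := by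
  have := convexityModulus_nonneg hn (2 * |τ| / m)
  unfold projectionModulus
  positivity

lemma tendsto_projectionModulus (hφ : StrictlyConvexNorm φ) (m : ℝ) :
    Tendsto (projectionModulus φ m) (𝓝 0) (𝓝 0) := by
  have habs : Tendsto (fun τ : ℝ => 2 * |τ|) (𝓝 0) (𝓝 0) := by
    simpa using (continuous_abs.tendsto (0 : ℝ)).const_mul 2
  have hmod : Tendsto (fun τ : ℝ => convexityModulus φ (2 * |τ| / m)) (𝓝 0) (𝓝 0) :=
    (tendsto_convexityModulus hφ).comp (by simpa using habs.div_const m)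
  unfold projectionModulus
  simpa using habs.add ((habs.const_add 1).mul hmod)

end Modulus

theorem stmt10_general {n : ℕ} (φ : Euc n → ℝ) (hφ : StrictlyConvexNorm φ) (K : Set (Euc n))
    (lam : ℝ) (hlam : 1 < lam) :
    ∃ ω : ℝ → ℝ, (∀ t : ℝ, 0 ≤ ω t) ∧ Tendsto ω (𝓝[>] 0) (𝓝 0) ∧
      ∀ (x y a b : Euc n), x ∉ K → ENNReal.ofReal lam ≤ rhoφ φ K x →
        a ∈ nearφ φ K x → b ∈ nearφ φ K y →
        φ (a - b) ≤ distφ φ K x * ω (φ (x - y) / distφ φ K x) := by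
  set m := min ((lam - 1) / 2) 1
  refine ⟨projectionModulus φ m, projectionModulus_nonneg hφ.1 m,
    (tendsto_projectionModulus hφ m).mono_left nhdsWithin_le_nhds, ?_⟩
  intro x y a b hx hlam_le ha hb
  have hd := distφ_pos hφ.1 ha hx
  obtain ⟨s, hs, hfar⟩ := hφ.exists_far_of_lt_rhoφ ha hd (μ := (1 + lam) / 2) (by linarith)
    ((ENNReal.ofReal_lt_ofReal_iff (by linarith)).mpr (by linarith) |>.trans_le hlam_le)
  have key := hφ.1.map_sub_le_of_far (m := m) (ha.2 ▸ hd) (lt_min (by linarith) one_pos)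
    ((min_le_left _ _).trans (by linarith)) (min_le_right _ _)
    (ha.2 ▸ hfar ▸ distφ_le hφ.1 hb.1 _) (map_sub_le_of_mem_nearφ hφ.1 ha hb)
  rw [ha.2] at key
  convert key using 1
  unfold projectionModulus
  rw [abs_of_nonneg (div_nonneg (hφ.1.nonneg _) hd.le)]
  field_simp

theorem stmt10 {n : ℕ} (φ : Euc n → ℝ) (hφ : StrictlyConvexNorm φ) (K : Set (Euc n))
    (hK : IsClosed K) (lam : ℝ) (hlam : 1 < lam) :
    ∃ ω : ℝ → ℝ, (∀ t : ℝ, 0 ≤ ω t) ∧ Tendsto ω (𝓝[>] 0) (𝓝 0) ∧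
      ∀ (x y a b : Euc n), x ∉ K → ENNReal.ofReal lam ≤ rhoφ φ K x →
        a ∈ nearφ φ K x → b ∈ nearφ φ K y →
        φ (a - b) ≤ distφ φ K x * ω (φ (x - y) / distφ φ K x) :=
  stmt10_general φ hφ K lam hlam
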